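/- arXiv:1911.12513 — 7 statements merged into one kernel-verified Lean document; each statement's English description precedes it below -/
import Mathlib

section
/- Let A and B be finite sets of products with B ⊆ A. Then g(A) − g(B) ≤ g(A \ B), i.e., the MNL expected revenue of A exceeds that of B by at most the MNL expected revenue of the products in A but not in B. -/
/-- MNL expected revenue of a finite set `S` of products, where product `i`
has revenue `α i` and preference weight `β i`. -/
noncomputable def g (α β : ℕ → ℝ) (S : Finset ℕ) : ℝ :=
  (∑ i ∈ S, α i * β i) / ((∑ i ∈ S, β i) + 1)

/-- Reachability of (0-based) position `t` of the sequence `S` under the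
cascade browse model: the product of the continuation probabilities of all
earlier products. -/
noncomputable def reach (θ : ℕ → ℝ) (S : List ℕ) (t : ℕ) : ℝ :=
  ∏ j ∈ Finset.range t, θ (S.getD j 0)

/-- Expected revenue of a sequence of products `S` under the cascade browse
model combined with the MNL choice model. -/
noncomputable def f (α β θ : ℕ → ℝ) (S : List ℕ) : ℝ :=
  (∑ t ∈ Finset.range (S.length - 1),
      reach θ S t * (1 - θ (S.getD t 0)) * g α β (S.take (t + 1)).toFinset)
    + reach θ S (S.length - 1) * g α β S.toFinset

/-- if `B ⊆ A` then `g A - g B ≤ g (A \ B)`. -/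
theorem stmt0 (α β : ℕ → ℝ) (hα : ∀ i, 0 ≤ α i) (hβ : ∀ i, 0 ≤ β i)
    (A B : Finset ℕ) (hBA : B ⊆ A) :
    g α β A - g α β B ≤ g α β (A \ B) := by
  have key : ∀ a b c d : ℝ, 0 ≤ a → 0 ≤ b → 0 ≤ c → 0 ≤ d →
      (a + c) / (b + d + 1) - a / (b + 1) ≤ c / (d + 1) := by
    intro a b c d ha hb hc hd
    rw [div_sub_div _ _ (by positivity) (by positivity),
      div_le_div_iff₀ (by positivity) (by positivity)]
    nlinarith [mul_nonneg hc hb, mul_nonneg (mul_nonneg hc hb) hb,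
      mul_nonneg ha hd, mul_nonneg (mul_nonneg ha hd) hd]
  have h1 : ∑ i ∈ A \ B, α i * β i + ∑ i ∈ B, α i * β i = ∑ i ∈ A, α i * β i :=
    Finset.sum_sdiff hBA
  have h2 : ∑ i ∈ A \ B, β i + ∑ i ∈ B, β i = ∑ i ∈ A, β i :=
    Finset.sum_sdiff hBA
  have := key (∑ i ∈ B, α i * β i) (∑ i ∈ B, β i) (∑ i ∈ A \ B, α i * β i)
    (∑ i ∈ A \ B, β i)
    (Finset.sum_nonneg fun i _ => mul_nonneg (hα i) (hβ i))
    (Finset.sum_nonneg fun i _ => hβ i)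
    (Finset.sum_nonneg fun i _ => mul_nonneg (hα i) (hβ i))
    (Finset.sum_nonneg fun i _ => hβ i)
  simp only [g]
  rw [← h1, ← h2, add_comm (∑ i ∈ A \ B, α i * β i) (∑ i ∈ B, α i * β i),
    add_comm (∑ i ∈ A \ B, β i) (∑ i ∈ B, β i)]
  exact this
end

section
/- For any nonempty duplicate-free list S = (s_1, …, s_k) of products, the expected revenue of the sequence is at most the largest MNL revenue over its prefixes: f(S) ≤ max_{1 ≤ t ≤ k} g({s_1, …, s_t}). -/
open Finset

theorem sum_prod_range_mul_one_sub_add_prod_range (p : ℕ → ℝ) (n : ℕ) :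
    ∑ t ∈ range n, (∏ j ∈ range t, p j) * (1 - p t) + ∏ j ∈ range n, p j = 1 := by
  induction n with
  | zero => simp
  | succ n ih => rw [sum_range_succ, prod_range_succ]; linear_combination ih

theorem cascade_average_le {p v : ℕ → ℝ} {M : ℝ} (hp : ∀ t, 0 ≤ p t ∧ p t ≤ 1) (n : ℕ)
    (hv : ∀ t ≤ n, v t ≤ M) :
    ∑ t ∈ range n, (∏ j ∈ range t, p j) * (1 - p t) * v t
      + (∏ j ∈ range n, p j) * v n ≤ M := by
  have hreach : ∀ t, 0 ≤ ∏ j ∈ range t, p j := fun t => prod_nonneg fun j _ => (hp j).1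
  calc ∑ t ∈ range n, (∏ j ∈ range t, p j) * (1 - p t) * v t + (∏ j ∈ range n, p j) * v n
      ≤ ∑ t ∈ range n, (∏ j ∈ range t, p j) * (1 - p t) * M + (∏ j ∈ range n, p j) * M := by
        gcongr with t ht
        · exact mul_nonneg (hreach t) (sub_nonneg.mpr (hp t).2)
        · exact hv t (mem_range.mp ht).le
        · exact hreach n
        · exact hv n le_rfl
    _ = M := by
        rw [← sum_mul, ← add_mul, sum_prod_range_mul_one_sub_add_prod_range, one_mul]

/-- the expected revenue of a nonempty duplicate-free sequence is
at most the largest MNL revenue over its prefixes. -/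
theorem stmt2 (α β θ : ℕ → ℝ)
    (hθ : ∀ i, 0 ≤ θ i ∧ θ i ≤ 1)
    (S : List ℕ) (hS : S ≠ []) :
    f α β θ S ≤ (Finset.range S.length).sup'
      (by simpa [Finset.nonempty_range_iff, List.length_eq_zero_iff] using hS)
      (fun t => g α β (S.take (t + 1)).toFinset) := by
  have hk : S.length - 1 + 1 = S.length := Nat.sub_add_cancel (List.length_pos_iff.mpr hS)
  have hlast : g α β S.toFinset = g α β (S.take (S.length - 1 + 1)).toFinset := by
    rw [hk, List.take_length]
  rw [f, hlast]
  refine cascade_average_le (p := fun j => θ (S.getD j 0)) (fun j => hθ _) _ fun t ht => ?_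
  exact le_sup' (fun t => g α β (S.take (t + 1)).toFinset) (mem_range.mpr (by omega))
end

section
/- Let S = (s_1, …, s_k) be a duplicate-free list of products and let 1 ≤ m ≤ k. Writing S_{≤m} = (s_1,…,s_m) and S_{>m} = (s_{m+1},…,s_k), and Θ_m = Π_{j<m} θ_{s_j}, the following decomposition inequality holds: f(S) ≤ f(S_{≤m}) + Θ_m · θ_{s_m} · f(S_{>m}). -/
lemma g_union_le {α β : ℕ → ℝ} (hα : ∀ i, 0 ≤ α i) (hβ : ∀ i, 0 ≤ β i) {A B : Finset ℕ}
    (h : Disjoint A B) : g α β (A ∪ B) ≤ g α β A + g α β B := by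
  have hA : 0 ≤ ∑ i ∈ A, α i * β i := Finset.sum_nonneg fun i _ => mul_nonneg (hα i) (hβ i)
  have hB : 0 ≤ ∑ i ∈ B, α i * β i := Finset.sum_nonneg fun i _ => mul_nonneg (hα i) (hβ i)
  have hwA : 0 ≤ ∑ i ∈ A, β i := Finset.sum_nonneg fun i _ => hβ i
  have hwB : 0 ≤ ∑ i ∈ B, β i := Finset.sum_nonneg fun i _ => hβ i
  rw [g, g, g, Finset.sum_union h, Finset.sum_union h, add_div]
  gcongr <;> linarith

section reach

variable {θ : ℕ → ℝ}

lemma reach_zero (S : List ℕ) : reach θ S 0 = 1 := Finset.prod_range_zero _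

lemma reach_succ (S : List ℕ) (t : ℕ) : reach θ S (t + 1) = reach θ S t * θ (S.getD t 0) :=
  Finset.prod_range_succ _ _

lemma reach_cons_succ (a : ℕ) (S : List ℕ) (t : ℕ) :
    reach θ (a :: S) (t + 1) = θ a * reach θ S t := by
  rw [reach, Finset.prod_range_succ', mul_comm]
  rfl

lemma reach_eq_prod_map_take {S : List ℕ} {t : ℕ} (h : t ≤ S.length) :
    reach θ S t = ((S.take t).map θ).prod := by
  induction S generalizing t with
  | nil => simp_all [reach_zero]
  | cons a S ih =>
    cases t with
    | zero => simp [reach_zero]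
    | succ t => simp [reach_cons_succ, ih (Nat.le_of_succ_le_succ h)]

end reach

/-- `f` of the sequence `S` when the products of `C` are already in the choice set. -/
noncomputable def fFrom (α β θ : ℕ → ℝ) (C : Finset ℕ) (S : List ℕ) : ℝ :=
  (∑ t ∈ Finset.range (S.length - 1),
      reach θ S t * (1 - θ (S.getD t 0)) * g α β (C ∪ (S.take (t + 1)).toFinset))
    + reach θ S (S.length - 1) * g α β (C ∪ S.toFinset)

section fFrom

variable {α β θ : ℕ → ℝ}

lemma fFrom_empty (S : List ℕ) : fFrom α β θ ∅ S = f α β θ S := by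
  simp only [fFrom, f, Finset.empty_union]

lemma fFrom_nil (C : Finset ℕ) : fFrom α β θ C [] = g α β C := by
  simp [fFrom, reach_zero]

lemma fFrom_cons (C : Finset ℕ) (a : ℕ) (L : List ℕ) :
    fFrom α β θ C (a :: L) =
      (1 - θ a) * g α β (insert a C) + θ a * fFrom α β θ (insert a C) L := by
  have hset : ∀ X : List ℕ, C ∪ (a :: X).toFinset = insert a C ∪ X.toFinset := fun X => by
    rw [List.toFinset_cons, Finset.union_insert, Finset.insert_union]
  cases L with
  | nil =>
    simp [fFrom, reach_zero]
    ring
  | cons b L =>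
    simp only [fFrom, List.length_cons, Nat.add_sub_cancel, Finset.sum_range_succ',
      reach_cons_succ, List.getD_cons_succ, List.take_succ_cons, hset]
    simp only [mul_assoc, ← Finset.mul_sum, reach_zero, List.getD_cons_zero, List.take_zero,
      List.toFinset_nil, Finset.union_empty]
    ring

variable (hα : ∀ i, 0 ≤ α i) (hβ : ∀ i, 0 ≤ β i) (hθ : ∀ i, 0 ≤ θ i ∧ θ i ≤ 1)
include hα hβ hθ

lemma fFrom_union_le {C D : Finset ℕ} {L : List ℕ} (hCD : Disjoint C D)
    (hCL : Disjoint C L.toFinset) : fFrom α β θ (C ∪ D) L ≤ g α β C + fFrom α β θ D L := by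
  induction L generalizing D with
  | nil => simpa only [fFrom_nil] using g_union_le hα hβ hCD
  | cons b L ih =>
    rw [List.toFinset_cons, Finset.disjoint_insert_right] at hCL
    have hCbD : Disjoint C (insert b D) := Finset.disjoint_insert_right.2 ⟨hCL.1, hCD⟩
    have hg := g_union_le hα hβ hCbD
    have hF := ih hCbD hCL.2
    rw [fFrom_cons, fFrom_cons, ← Finset.union_insert]
    nlinarith [hθ b]

lemma fFrom_append_le {C : Finset ℕ} {A B : List ℕ}
    (hC : Disjoint (C ∪ A.toFinset) B.toFinset) :
    fFrom α β θ C (A ++ B) ≤ fFrom α β θ C A + (A.map θ).prod * f α β θ B := by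
  induction A generalizing C with
  | nil =>
    simpa [fFrom_nil, ← fFrom_empty] using
      fFrom_union_le hα hβ hθ (Finset.disjoint_empty_right C) (by simpa using hC)
  | cons a A ih =>
    have hF := ih (C := insert a C) <| by
      simpa [Finset.insert_union, Finset.union_insert] using hC
    rw [List.cons_append, fFrom_cons, fFrom_cons, List.map_cons, List.prod_cons]
    nlinarith [hθ a]

end fFrom

theorem stmt4_general (α β θ : ℕ → ℝ) (hα : ∀ i, 0 ≤ α i) (hβ : ∀ i, 0 ≤ β i)
    (hθ : ∀ i, 0 ≤ θ i ∧ θ i ≤ 1)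
    (S : List ℕ) (hnd : S.Nodup) (m : ℕ) (hm1 : 1 ≤ m) :
    f α β θ S ≤ f α β θ (S.take m)
      + reach θ S (m - 1) * θ (S.getD (m - 1) 0) * f α β θ (S.drop m) := by
  have hdisj : Disjoint (S.take m).toFinset (S.drop m).toFinset :=
    List.disjoint_toFinset_iff_disjoint.2 (List.disjoint_take_drop hnd le_rfl)
  have hsplit := fFrom_append_le hα hβ hθ (C := ∅) (by simpa using hdisj)
  rw [List.take_append_drop, fFrom_empty, fFrom_empty] at hsplit
  have hcoef : reach θ S (m - 1) * θ (S.getD (m - 1) 0) * f α β θ (S.drop m)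
      = ((S.take m).map θ).prod * f α β θ (S.drop m) := by
    rw [← reach_succ, Nat.sub_add_cancel hm1]
    rcases le_or_gt m S.length with hm | hm
    · rw [reach_eq_prod_map_take hm]
    · simp [List.drop_eq_nil_of_le hm.le, f, reach_zero, g]
  rwa [hcoef]

/-- decomposition inequality
`f S ≤ f S_{≤m} + Θ_m · θ_{s_m} · f S_{>m}` for `1 ≤ m ≤ |S|`. -/
theorem stmt4 (α β θ : ℕ → ℝ) (hα : ∀ i, 0 ≤ α i) (hβ : ∀ i, 0 ≤ β i)
    (hθ : ∀ i, 0 ≤ θ i ∧ θ i ≤ 1)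
    (S : List ℕ) (hnd : S.Nodup) (m : ℕ) (hm1 : 1 ≤ m) (hm2 : m ≤ S.length) :
    f α β θ S ≤ f α β θ (S.take m)
      + reach θ S (m - 1) * θ (S.getD (m - 1) 0) * f α β θ (S.drop m) :=
  stmt4_general α β θ hα hβ hθ S hnd m hm1
end

section
/- (Ceiling-discretization lower bound) Let ε > 0, K > 0, let B be a positive integer, and let γ_i ≥ 0 for products i. Let S′ and S* be finite sets of products with |S′| ≤ B, Σ_{i∈S′} ⌈γ_i B/(εK)⌉ ≥ Σ_{i∈S*} ⌈γ_i B/(εK)⌉, and Σ_{i∈S*} γ_i ≥ K/(1+ε). Then Σ_{i∈S′} γ_i ≥ (1 − ε(1+ε)) Σ_{i∈S*} γ_i. -/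
/-!
Rounding each `γ i * r` up to an integer overshoots by less than one per term, so the rounded
totals of two sets compare like the true totals up to an additive error of `#S' / r`. With
`r = B / (ε K)` and `#S' ≤ B` this error is at most `ε K`, which the lower bound
`K ≤ (1 + ε) Σ_{S*} γ` turns into the relative error `ε (1 + ε)`.
-/

open Finset

section CeilSum

variable {ι α : Type*} [Field α] [LinearOrder α] [IsStrictOrderedRing α] [FloorRing α]

theorem sum_mul_le_sum_ceil_mul (s : Finset ι) (f : ι → α) (r : α) :
    (∑ i ∈ s, f i) * r ≤ ∑ i ∈ s, (⌈f i * r⌉ : α) := by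
  rw [sum_mul]
  exact sum_le_sum fun i _ => Int.le_ceil _

theorem sum_ceil_mul_le_sum_mul_add_card (s : Finset ι) (f : ι → α) (r : α) :
    ∑ i ∈ s, (⌈f i * r⌉ : α) ≤ (∑ i ∈ s, f i) * r + #s := by
  calc ∑ i ∈ s, (⌈f i * r⌉ : α) ≤ ∑ i ∈ s, (f i * r + 1) :=
        sum_le_sum fun i _ => (Int.ceil_lt_add_one _).le
    _ = (∑ i ∈ s, f i) * r + #s := by
        rw [sum_add_distrib, sum_mul, sum_const, nsmul_one]

theorem sum_le_sum_add_of_sum_ceil_mul_le {s t : Finset ι} {f : ι → α} {r : α} (hr : 0 < r)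
    (hceil : ∑ i ∈ s, ⌈f i * r⌉ ≤ ∑ i ∈ t, ⌈f i * r⌉) :
    ∑ i ∈ s, f i ≤ ∑ i ∈ t, f i + #t / r := by
  have hceil' : ∑ i ∈ s, (⌈f i * r⌉ : α) ≤ ∑ i ∈ t, (⌈f i * r⌉ : α) := by exact_mod_cast hceil
  have h : (∑ i ∈ s, f i) * r ≤ (∑ i ∈ t, f i) * r + #t :=
    (sum_mul_le_sum_ceil_mul s f r).trans <| hceil'.trans <| sum_ceil_mul_le_sum_mul_add_card t f r
  rw [add_div' _ _ _ hr.ne', le_div_iff₀ hr]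
  exact h

end CeilSum

theorem stmt10_general (ε K : ℝ) (hε : 0 < ε) (hK : 0 < K) (B : ℕ) (hB : 0 < B)
    (γ : ℕ → ℝ)
    (S' Sstar : Finset ℕ) (hcard : S'.card ≤ B)
    (hceil : (∑ i ∈ Sstar, ⌈γ i * (B : ℝ) / (ε * K)⌉)
      ≤ ∑ i ∈ S', ⌈γ i * (B : ℝ) / (ε * K)⌉)
    (hlow : K / (1 + ε) ≤ ∑ i ∈ Sstar, γ i) :
    (1 - ε * (1 + ε)) * ∑ i ∈ Sstar, γ i ≤ ∑ i ∈ S', γ i := by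
  have hBpos : (0 : ℝ) < B := by exact_mod_cast hB
  have hr : 0 < (B : ℝ) / (ε * K) := by positivity
  simp only [mul_div_assoc] at hceil
  have hadd := sum_le_sum_add_of_sum_ceil_mul_le hr hceil
  have herr : (#S' : ℝ) / (B / (ε * K)) ≤ ε * K := by
    rw [div_le_iff₀ hr, mul_div_cancel₀ _ (by positivity)]
    exact_mod_cast hcard
  have hK' : K ≤ (1 + ε) * ∑ i ∈ Sstar, γ i := by
    rwa [div_le_iff₀ (by positivity), mul_comm] at hlow
  linarith [mul_le_mul_of_nonneg_left hK' hε.le]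

/-- ceiling-discretization lower bound. -/
theorem stmt10 (ε K : ℝ) (hε : 0 < ε) (hK : 0 < K) (B : ℕ) (hB : 0 < B)
    (γ : ℕ → ℝ) (hγ : ∀ i, 0 ≤ γ i)
    (S' Sstar : Finset ℕ) (hcard : S'.card ≤ B)
    (hceil : (∑ i ∈ Sstar, ⌈γ i * (B : ℝ) / (ε * K)⌉)
      ≤ ∑ i ∈ S', ⌈γ i * (B : ℝ) / (ε * K)⌉)
    (hlow : K / (1 + ε) ≤ ∑ i ∈ Sstar, γ i) :
    (1 - ε * (1 + ε)) * ∑ i ∈ Sstar, γ i ≤ ∑ i ∈ S', γ i :=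
  stmt10_general ε K hε hK B hB γ S' Sstar hcard hceil hlow
end

section
/- (Floor-discretization upper bound) Let ε > 0, K > 0, let B be a positive integer, and let β_i ≥ 0 for products i. Let S′ and S* be finite sets of products with |S′| ≤ B, Σ_{i∈S′} ⌊β_i B/(εK)⌋ ≤ Σ_{i∈S*} ⌊β_i B/(εK)⌋, and Σ_{i∈S*} β_i ≥ K/(1+ε). Then Σ_{i∈S′} β_i ≤ (1 + ε(1+ε)) Σ_{i∈S*} β_i. -/
/-- floor-discretization upper bound. -/
theorem stmt11 (ε K : ℝ) (hε : 0 < ε) (hK : 0 < K) (B : ℕ) (hB : 0 < B)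
    (β : ℕ → ℝ) (hβ : ∀ i, 0 ≤ β i)
    (S' Sstar : Finset ℕ) (hcard : S'.card ≤ B)
    (hfloor : (∑ i ∈ S', ⌊β i * (B : ℝ) / (ε * K)⌋)
      ≤ ∑ i ∈ Sstar, ⌊β i * (B : ℝ) / (ε * K)⌋)
    (hlow : K / (1 + ε) ≤ ∑ i ∈ Sstar, β i) :
    (∑ i ∈ S', β i) ≤ (1 + ε * (1 + ε)) * ∑ i ∈ Sstar, β i := by
  have hBpos : (0:ℝ) < B := by exact_mod_cast hB
  have hεK : (0:ℝ) < ε * K := mul_pos hε hK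
  set c : ℝ := ε * K / B with hc
  have hcpos : 0 < c := div_pos hεK hBpos
  set f : ℕ → ℤ := fun i => ⌊β i * (B : ℝ) / (ε * K)⌋ with hf
  have hub : ∀ i, β i ≤ c * ((f i : ℝ) + 1) := by
    intro i
    have h1 : β i * (B : ℝ) / (ε * K) < (f i : ℝ) + 1 := Int.lt_floor_add_one _
    have := (div_lt_iff₀ hεK).mp h1
    have h2 : β i * B < ((f i : ℝ) + 1) * (ε * K) := this
    rw [hc]
    rw [div_mul_eq_mul_div, le_div_iff₀ hBpos]
    nlinarith
  have hlb : ∀ i, c * (f i : ℝ) ≤ β i := by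
    intro i
    have h1 : (f i : ℝ) ≤ β i * (B : ℝ) / (ε * K) := Int.floor_le _
    rw [hc]
    rw [div_mul_eq_mul_div, div_le_iff₀ hBpos]
    have := (le_div_iff₀ hεK).mp h1
    nlinarith
  have step1 : ∑ i ∈ S', β i ≤ c * ((∑ i ∈ S', (f i : ℝ)) + S'.card) := by
    calc ∑ i ∈ S', β i ≤ ∑ i ∈ S', c * ((f i : ℝ) + 1) :=
          Finset.sum_le_sum fun i _ => hub i
      _ = c * ((∑ i ∈ S', (f i : ℝ)) + S'.card) := by
          rw [← Finset.mul_sum, Finset.sum_add_distrib, Finset.sum_const]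
          simp [mul_comm]
  have hfsum : (∑ i ∈ S', (f i : ℝ)) ≤ ∑ i ∈ Sstar, (f i : ℝ) := by
    exact_mod_cast hfloor
  have step2 : c * ((∑ i ∈ S', (f i : ℝ)) + S'.card)
      ≤ c * ((∑ i ∈ Sstar, (f i : ℝ)) + B) := by
    apply mul_le_mul_of_nonneg_left _ hcpos.le
    have : (S'.card : ℝ) ≤ (B : ℝ) := by exact_mod_cast hcard
    linarith
  have step3 : c * ((∑ i ∈ Sstar, (f i : ℝ)) + B) ≤ (∑ i ∈ Sstar, β i) + ε * K := by
    have h1 : c * (∑ i ∈ Sstar, (f i : ℝ)) ≤ ∑ i ∈ Sstar, β i := by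
      rw [Finset.mul_sum]
      exact Finset.sum_le_sum fun i _ => hlb i
    have h2 : c * B = ε * K := by
      rw [hc]; field_simp
    nlinarith
  have hKle : K ≤ (1 + ε) * ∑ i ∈ Sstar, β i := by
    have := (div_le_iff₀ (by linarith : (0:ℝ) < 1 + ε)).mp hlow
    linarith [this]
  nlinarith [step1, step2, step3]
end

section
/- (Lemma 3, 'Lemma 14' conclusion) Let ε > 0, ρ ∈ [0,1], B ≥ 1, and let (𝒮*, y*) be an optimal solution to P.A.1. Suppose 𝒮′ is a set of products with y* ∉ 𝒮′ such that Σ_{i∈𝒮′} α_i β_i ≥ (1 − ε(1+ε)) Σ_{i∈𝒮*} α_i β_i and Σ_{i∈𝒮′} β_i ≤ (1 + ε(1+ε)) Σ_{i∈𝒮*} β_i. Then g(𝒮′ ∪ {y*}) ≥ ((1 − ε(1+ε))/(1 + ε(1+ε))) · g(𝒮* ∪ {y*}). -/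
/-- Lemma 3 / "Lemma 14" conclusion. -/
theorem stmt12 (α β θ : ℕ → ℝ) (hα : ∀ i, 0 ≤ α i) (hβ : ∀ i, 0 ≤ β i)
    (hθ : ∀ i, 0 ≤ θ i ∧ θ i ≤ 1)
    (B : ℕ) (hB : 1 ≤ B) (ρ ε : ℝ) (hρ0 : 0 ≤ ρ) (hρ1 : ρ ≤ 1) (hε : 0 < ε)
    (Sstar : Finset ℕ) (ystar : ℕ)
    (hfeas : ystar ∉ Sstar ∧ ρ ≤ ∏ i ∈ Sstar, θ i ∧ Sstar.card < B)
    (hopt : ∀ (T : Finset ℕ) (y' : ℕ), y' ∉ T → ρ ≤ ∏ i ∈ T, θ i → T.card < B →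
        g α β (insert y' T) ≤ g α β (insert ystar Sstar))
    (S' : Finset ℕ) (hy' : ystar ∉ S')
    (h1 : (1 - ε * (1 + ε)) * ∑ i ∈ Sstar, α i * β i ≤ ∑ i ∈ S', α i * β i)
    (h2 : (∑ i ∈ S', β i) ≤ (1 + ε * (1 + ε)) * ∑ i ∈ Sstar, β i) :
    (1 - ε * (1 + ε)) / (1 + ε * (1 + ε)) * g α β (insert ystar Sstar)
      ≤ g α β (insert ystar S') := by
  classical
  unfold g
  rw [Finset.sum_insert hfeas.1, Finset.sum_insert hfeas.1,
      Finset.sum_insert hy', Finset.sum_insert hy']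
  set c := ε * (1 + ε) with hc
  have hc0 : 0 < c := by positivity
  set a := α ystar * β ystar with ha'
  set b := β ystar with hb'
  have hA1 : (0:ℝ) ≤ ∑ i ∈ Sstar, α i * β i :=
    Finset.sum_nonneg fun i _ => mul_nonneg (hα i) (hβ i)
  have hB1 : (0:ℝ) ≤ ∑ i ∈ Sstar, β i := Finset.sum_nonneg fun i _ => hβ i
  have hA2 : (0:ℝ) ≤ ∑ i ∈ S', α i * β i :=
    Finset.sum_nonneg fun i _ => mul_nonneg (hα i) (hβ i)
  have hB2 : (0:ℝ) ≤ ∑ i ∈ S', β i := Finset.sum_nonneg fun i _ => hβ i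
  have ha : 0 ≤ a := mul_nonneg (hα ystar) (hβ ystar)
  have hb : 0 ≤ b := hβ ystar
  set A1 := ∑ i ∈ Sstar, α i * β i
  set B1 := ∑ i ∈ Sstar, β i
  set A2 := ∑ i ∈ S', α i * β i
  set B2 := ∑ i ∈ S', β i
  have hd1 : (0:ℝ) < b + B1 + 1 := by linarith
  have hd2 : (0:ℝ) < b + B2 + 1 := by linarith
  by_cases h : 1 - c ≤ 0
  · have hL : (1 - c) / (1 + c) * ((a + A1) / (b + B1 + 1)) ≤ 0 := by
      apply mul_nonpos_of_nonpos_of_nonneg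
      · exact div_nonpos_of_nonpos_of_nonneg h (by linarith)
      · exact div_nonneg (by linarith) hd1.le
    have hR : (0:ℝ) ≤ (a + A2) / (b + B2 + 1) := div_nonneg (by linarith) hd2.le
    linarith [hL, hR]
  · push_neg at h
    rw [div_mul_div_comm, div_le_div_iff₀ (mul_pos (by linarith : (0:ℝ) < 1 + c) hd1) hd2]
    nlinarith [mul_le_mul_of_nonneg_left h2 (by linarith : (0:ℝ) ≤ 1 - c),
      mul_le_mul_of_nonneg_right h1 (le_of_lt hd1),
      mul_le_mul_of_nonneg_left h1 (le_of_lt hc0),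
      mul_nonneg ha hb, mul_nonneg hA1 hb, mul_nonneg (mul_nonneg hc0.le ha) hB1,
      mul_nonneg (mul_nonneg hc0.le hA1) hb,
      mul_le_mul_of_nonneg_left h2 (mul_nonneg (by linarith : (0:ℝ) ≤ 1 - c) (by linarith : (0:ℝ) ≤ a + A1))]
end

section
/- (Lemma by Hopp and Xu, used as Lemma 17) Let 𝒮 be a nonempty finite set of products with qualities q_i and costs c_i, and let x ≥ 0 satisfy x·e^x = Σ_{i∈𝒮} e^{q_i − c_i − 1}. Then for every price vector p one has g(𝒮, p) ≤ x, and setting p_i = x + c_i + 1 for all i ∈ 𝒮 achieves g(𝒮, p) = x; hence max_p g(𝒮, p) = x. -/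
/-- MNL expected revenue of a finite set `S` of products at prices `p`, where
product `i` has quality `q i` and cost `c i`. -/
noncomputable def gp (q c p : ℕ → ℝ) (S : Finset ℕ) : ℝ :=
  (∑ i ∈ S, (p i - c i) * Real.exp (q i - p i)) /
    ((∑ i ∈ S, Real.exp (q i - p i)) + 1)

/-- Expected revenue of a sequence of products `S` at prices `p` under the
cascade browse model combined with the MNL choice model. -/
noncomputable def fp (q c θ p : ℕ → ℝ) (S : List ℕ) : ℝ :=
  (∑ t ∈ Finset.range (S.length - 1),
      reach θ S t * (1 - θ (S.getD t 0)) * gp q c p (S.take (t + 1)).toFinset)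
    + reach θ S (S.length - 1) * gp q c p S.toFinset

lemma key (y : ℝ) : y * Real.exp (-y) ≤ Real.exp (-1) := by
  have h : y ≤ Real.exp (y - 1) := by
    have := Real.add_one_le_exp (y - 1); linarith
  calc y * Real.exp (-y) ≤ Real.exp (y - 1) * Real.exp (-y) := by
        apply mul_le_mul_of_nonneg_right h (Real.exp_pos _).le
    _ = Real.exp (-1) := by rw [← Real.exp_add]; ring_nf

/-- Hopp–Xu, used as Lemma 17: if `x ≥ 0` satisfies
`x e^x = Σ_{i∈𝒮} e^{q_i - c_i - 1}`, then `x` is the maximum of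
`g(𝒮, p)` over price vectors `p`, achieved at `p_i = x + c_i + 1`. -/
theorem stmt13 (q c : ℕ → ℝ) (S : Finset ℕ) (hS : S.Nonempty)
    (x : ℝ) (hx : 0 ≤ x)
    (hxe : x * Real.exp x = ∑ i ∈ S, Real.exp (q i - c i - 1)) :
    (∀ p : ℕ → ℝ, gp q c p S ≤ x) ∧
      gp q c (fun i => x + c i + 1) S = x := by
  have hdenpos : ∀ p : ℕ → ℝ, (0:ℝ) < (∑ i ∈ S, Real.exp (q i - p i)) + 1 := by
    intro p
    have : (0:ℝ) ≤ ∑ i ∈ S, Real.exp (q i - p i) :=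
      Finset.sum_nonneg fun i _ => (Real.exp_pos _).le
    linarith
  constructor
  · intro p
    rw [gp, div_le_iff₀ (hdenpos p)]
    have hterm : ∀ i ∈ S, (p i - c i) * Real.exp (q i - p i)
        ≤ x * Real.exp (q i - p i) + Real.exp (q i - c i - 1 - x) := by
      intro i _
      have h1 : (p i - c i - x) * Real.exp (q i - p i) ≤ Real.exp (q i - c i - 1 - x) := by
        have hk := key (p i - c i - x)
        have h2 : (p i - c i - x) * Real.exp (-(p i - c i - x)) * Real.exp (q i - c i - x)
            ≤ Real.exp (-1) * Real.exp (q i - c i - x) :=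
          mul_le_mul_of_nonneg_right hk (Real.exp_pos _).le
        calc (p i - c i - x) * Real.exp (q i - p i)
            = (p i - c i - x) * Real.exp (-(p i - c i - x)) * Real.exp (q i - c i - x) := by
              rw [mul_assoc, ← Real.exp_add]; ring_nf
          _ ≤ Real.exp (-1) * Real.exp (q i - c i - x) := h2
          _ = Real.exp (q i - c i - 1 - x) := by rw [← Real.exp_add]; ring_nf
      nlinarith [h1]
    calc ∑ i ∈ S, (p i - c i) * Real.exp (q i - p i)
        ≤ ∑ i ∈ S, (x * Real.exp (q i - p i) + Real.exp (q i - c i - 1 - x)) :=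
          Finset.sum_le_sum hterm
      _ = x * (∑ i ∈ S, Real.exp (q i - p i)) + Real.exp (-x) * ∑ i ∈ S, Real.exp (q i - c i - 1) := by
          rw [Finset.sum_add_distrib, Finset.mul_sum, Finset.mul_sum]
          congr 1
          apply Finset.sum_congr rfl
          intro i _
          rw [← Real.exp_add]; ring_nf
      _ = x * ((∑ i ∈ S, Real.exp (q i - p i)) + 1) := by
          rw [← hxe]
          have : Real.exp (-x) * (x * Real.exp x) = x := by
            rw [← mul_assoc, mul_comm (Real.exp (-x)) x, mul_assoc, ← Real.exp_add]
            simp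
          rw [this]; ring
  · rw [gp]
    have h1 : ∀ i ∈ S, (x + c i + 1 - c i) * Real.exp (q i - (x + c i + 1))
        = (x + 1) * (Real.exp (-x - 1) * Real.exp (q i - c i)) := by
      intro i _; rw [← Real.exp_add]; ring_nf
    have h2 : ∀ i ∈ S, Real.exp (q i - (x + c i + 1))
        = Real.exp (-x - 1) * Real.exp (q i - c i) := by
      intro i _; rw [← Real.exp_add]; ring_nf
    have hsum : ∑ i ∈ S, Real.exp (q i - (x + c i + 1)) = x := by
      rw [Finset.sum_congr rfl h2, ← Finset.mul_sum]
      have h3 : ∑ i ∈ S, Real.exp (q i - c i) = x * Real.exp (x + 1) := by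
        have : ∀ i ∈ S, Real.exp (q i - c i - 1) = Real.exp (q i - c i) * Real.exp (-1) := by
          intro i _; rw [← Real.exp_add]; ring_nf
        rw [Finset.sum_congr rfl this, ← Finset.sum_mul] at hxe
        calc ∑ i ∈ S, Real.exp (q i - c i)
            = (∑ i ∈ S, Real.exp (q i - c i)) * (Real.exp (-1) * Real.exp 1) := by
              rw [← Real.exp_add]; norm_num
          _ = x * Real.exp x * Real.exp 1 := by rw [← mul_assoc, ← hxe]
          _ = x * Real.exp (x + 1) := by rw [mul_assoc, ← Real.exp_add]
      rw [h3]
      have h0 : Real.exp (-x - 1) * Real.exp (x + 1) = 1 := by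
        rw [← Real.exp_add]; norm_num
      calc Real.exp (-x - 1) * (x * Real.exp (x + 1))
          = x * (Real.exp (-x - 1) * Real.exp (x + 1)) := by ring
        _ = x := by rw [h0, mul_one]
    simp only [Finset.sum_congr rfl h1]
    rw [← Finset.mul_sum, ← Finset.mul_sum, hsum]
    have h4 : (Real.exp (-x - 1) * ∑ i ∈ S, Real.exp (q i - c i)) = x := by
      rw [Finset.mul_sum, ← Finset.sum_congr rfl h2, hsum]
    rw [h4]
    field_simp
end
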